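/- Define the Y-basis bras ⟨y_0| = (1/√2)(⟨0| − i⟨1|) and ⟨y_1| = (1/√2)(⟨0| + i⟨1|), and the Hadamard-basis ancilla states |h_r⟩ = (1/√2)(|0⟩ + (−1)^r|1⟩) for r ∈ {0,1}. For r, s ∈ {0,1}, set ε = (−1)^{r+s}. Then the following identity of linear maps from ℂ^4 to ℂ^4 holds: (I_4 ⊗ ⟨y_s|) ∘ cZ_{a,b} ∘ cZ_{p,b} ∘ (cZ_{a,p} ⊗ |h_r⟩) = (1/√2) · e^{−iεπ/4} · (S^ε ⊗ S^ε), where S^{+1} = diag(1,i) and S^{−1} = diag(1,−i). Thus a bridge qubit prepared in a Hadamard-basis state |h_r⟩, entangled to its two neighbours by controlled-Z gates and measured in the Pauli-Y basis with outcome s, implements the controlled-Z gate cZ_{a,p} between its neighbours up to the local corrections S^{−ε} ⊗ S^{−ε}, a global phase, and normalization 1/√2 (the bridge case of Lemma 3, equation (27)). -/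

import Mathlib

open Matrix Kronecker Complex

noncomputable section

/-- The single-qubit Pauli-Z matrix `diag(1, -1)`. -/
def qZ : Matrix (ZMod 2) (ZMod 2) ℂ :=
  Matrix.diagonal (fun b => if b = 0 then 1 else -1)

/-- The phase gate `S = diag(1, i)`. -/
def qS : Matrix (ZMod 2) (ZMod 2) ℂ :=
  Matrix.diagonal (fun b => if b = 0 then 1 else Complex.I)

/-- The single-qubit computational basis state `|b⟩`. -/
def ketb (b : ZMod 2) : ZMod 2 → ℂ := Pi.single b 1

/-- The Pauli-Y eigenstate `|y_s⟩ = (|0⟩ + (−1)^s i |1⟩)/√2`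
(`|y_0⟩ = (|0⟩ + i|1⟩)/√2`, `|y_1⟩ = (|0⟩ − i|1⟩)/√2`). -/
def yket (s : ZMod 2) : ZMod 2 → ℂ :=
  ((Real.sqrt 2 : ℂ))⁻¹ • (ketb 0 + ((-1 : ℂ) ^ s.val * Complex.I) • ketb 1)

/-- The Hadamard-basis state `|h_r⟩ = (1/√2)(|0⟩ + (−1)^r |1⟩)`. -/
def hket (r : ZMod 2) : ZMod 2 → ℂ :=
  ((Real.sqrt 2 : ℂ))⁻¹ • (ketb 0 + ((-1 : ℂ) ^ r.val) • ketb 1)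

/-- Three qubits ordered `a, p, b`: qubits `a, p` form the `ℂ⁴` register and
`b` is the ancilla. `cZ_{a,b}` is the controlled-Z between qubit `a` and `b`. -/
def cZab : Matrix ((ZMod 2 × ZMod 2) × ZMod 2) ((ZMod 2 × ZMod 2) × ZMod 2) ℂ :=
  Matrix.diagonal (fun x => (-1 : ℂ) ^ (x.1.1.val * x.2.val))

/-- `cZ_{p,b}`: the controlled-Z between qubit `p` and the ancilla `b`. -/
def cZpb : Matrix ((ZMod 2 × ZMod 2) × ZMod 2) ((ZMod 2 × ZMod 2) × ZMod 2) ℂ :=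
  Matrix.diagonal (fun x => (-1 : ℂ) ^ (x.1.2.val * x.2.val))

/-- `cZ_{a,p}`: the controlled-Z gate between qubits `a` and `p`. -/
def cZap : Matrix (ZMod 2 × ZMod 2) (ZMod 2 × ZMod 2) ℂ :=
  Matrix.diagonal (fun y => (-1 : ℂ) ^ (y.1.val * y.2.val))

/-- The map `v ↦ v ⊗ |w⟩` adjoining the ancilla `b` in state `w`, as a matrix. -/
def injB (w : ZMod 2 → ℂ) :
    Matrix ((ZMod 2 × ZMod 2) × ZMod 2) (ZMod 2 × ZMod 2) ℂ :=
  Matrix.of fun x y => (if x.1 = y then 1 else 0) * w x.2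

/-- Contraction of the ancilla `b` with the Y-basis bra `⟨y_s|`, as a matrix. -/
def projY (s : ZMod 2) :
    Matrix (ZMod 2 × ZMod 2) ((ZMod 2 × ZMod 2) × ZMod 2) ℂ :=
  Matrix.of fun y x => (if y = x.1 then 1 else 0) * (starRingEnd ℂ) (yket s x.2)

/-! The three controlled-Z gates are diagonal in the computational basis, so the composite
is the diagonal matrix whose entry at `|a p⟩` is the sign `(-1)^{ap}` of `cZ_{a,p}` times
the ancilla amplitude `⟨y_s| Z^{a+p} |h_r⟩ = (1 - (-1)^{a+p} u) / 2`, where `u = ε i`.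
Since `u² = -1`, one has `(-1)^{ap} (1 - (-1)^{a+p} u) = (1 - u) u^{a+p}`; on the
other side `S^ε = diag(1, u)` and `e^{-iεπ/4} = (1 - u)/√2`. -/

lemma zmod_two_eq_zero_or_one (b : ZMod 2) : b = 0 ∨ b = 1 := by
  revert b; decide

lemma sum_zmod_two {M : Type*} [AddCommMonoid M] (f : ZMod 2 → M) :
    ∑ b, f b = f 0 + f 1 := Fin.sum_univ_two f

lemma ofReal_sqrt_two_inv_mul_self :
    ((Real.sqrt 2 : ℂ))⁻¹ * ((Real.sqrt 2 : ℂ))⁻¹ = 1 / 2 := by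
  rw [← mul_inv, ← Complex.ofReal_mul, Real.mul_self_sqrt zero_le_two]; push_cast; ring

lemma hket_apply (r b : ZMod 2) :
    hket r b = ((Real.sqrt 2 : ℂ))⁻¹ * ((-1) ^ r.val) ^ b.val := by
  rcases zmod_two_eq_zero_or_one b with rfl | rfl <;> simp [hket, ketb, ZMod.val_one]

lemma yket_apply (s b : ZMod 2) :
    yket s b = ((Real.sqrt 2 : ℂ))⁻¹ * ((-1) ^ s.val * I) ^ b.val := by
  rcases zmod_two_eq_zero_or_one b with rfl | rfl <;> simp [yket, ketb, ZMod.val_one]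

lemma qS_zpow {ε : ℤ} (hε : ε = 1 ∨ ε = -1) :
    qS ^ ε = diagonal fun b : ZMod 2 => ((ε : ℂ) * I) ^ b.val := by
  have hS : qS = diagonal fun b : ZMod 2 => I ^ b.val := by
    rw [qS]; congr 1; funext b
    rcases zmod_two_eq_zero_or_one b with rfl | rfl <;> simp [ZMod.val_one]
  rcases hε with rfl | rfl
  · simpa using hS
  · rw [Matrix.zpow_neg_one]
    refine inv_eq_left_inv ?_
    rw [hS, diagonal_mul_diagonal, ← diagonal_one]
    congr 1; funext b
    rcases zmod_two_eq_zero_or_one b with rfl | rfl <;> simp [ZMod.val_one]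

lemma exp_neg_mul_I_mul_pi_div_four {ε : ℤ} (hε : ε = 1 ∨ ε = -1) :
    exp (-(ε : ℂ) * I * (Real.pi / 4)) = ((Real.sqrt 2 : ℂ))⁻¹ * (1 - ε * I) := by
  have harg : -(ε : ℂ) * I * (Real.pi / 4) = ((-(ε * (Real.pi / 4)) : ℝ) : ℂ) * I := by
    push_cast; ring
  have hcos : Real.cos (ε * (Real.pi / 4)) = Real.sqrt 2 / 2 := by
    rcases hε with rfl | rfl <;> simp [Real.cos_pi_div_four]
  have hsin : Real.sin (ε * (Real.pi / 4)) = ε * (Real.sqrt 2 / 2) := by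
    rcases hε with rfl | rfl <;> simp [Real.sin_pi_div_four]
  have hsqrt : ((Real.sqrt 2 : ℂ))⁻¹ = (Real.sqrt 2 : ℂ) / 2 := by
    have h := ofReal_sqrt_two_inv_mul_self
    field_simp at h ⊢
    exact h
  rw [harg, exp_mul_I, ← ofReal_cos, ← ofReal_sin, Real.cos_neg, Real.sin_neg, hcos, hsin,
    hsqrt]
  push_cast
  ring

lemma injB_mul_diagonal (w : ZMod 2 → ℂ) (d : ZMod 2 × ZMod 2 → ℂ) :
    injB w * diagonal d = diagonal (fun x : (ZMod 2 × ZMod 2) × ZMod 2 => d x.1) * injB w := by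
  refine Matrix.ext fun x y => ?_
  rw [mul_diagonal, diagonal_mul]
  simp only [injB, of_apply]
  split_ifs with h
  · rw [h]; ring
  · simp

lemma projY_mul_diagonal_mul_injB (s : ZMod 2) (w : ZMod 2 → ℂ)
    (d : (ZMod 2 × ZMod 2) × ZMod 2 → ℂ) :
    projY s * diagonal d * injB w
      = diagonal fun y => ∑ b, star (yket s b) * d (y, b) * w b := by
  refine Matrix.ext fun y y' => ?_
  rw [mul_apply, Fintype.sum_prod_type]
  simp only [mul_diagonal, projY, injB, of_apply, diagonal_apply, ite_mul, mul_ite, one_mul,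
    zero_mul, mul_zero, Finset.sum_ite_irrel, Finset.sum_const_zero, Finset.sum_ite_eq',
    Finset.mem_univ, if_true]
  split_ifs with h
  · simp only [h, Complex.star_def]
  · rfl

lemma sum_star_yket_mul_neg_one_pow_mul_hket (r s : ZMod 2) (k : ℕ) :
    ∑ b, star (yket s b) * (-1) ^ (k * b.val) * hket r b
      = (1 - (-1) ^ k * (-1) ^ (r.val + s.val) * I) / 2 := by
  simp only [sum_zmod_two, yket_apply, hket_apply, ZMod.val_zero, ZMod.val_one, star_mul',
    star_pow, star_neg, star_one, star_inv₀, Complex.star_def, conj_ofReal, conj_I, pow_zero,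
    pow_one, mul_zero, mul_one, pow_add]
  linear_combination
    (1 - (-1) ^ k * (-1) ^ r.val * (-1) ^ s.val * I) * ofReal_sqrt_two_inv_mul_self

lemma bridge_eq_diagonal (r s : ZMod 2) :
    projY s * cZab * cZpb * (injB (hket r) * cZap) = diagonal fun y =>
      (-1) ^ (y.1.val * y.2.val) *
        ((1 - (-1) ^ (y.1.val + y.2.val) * (-1) ^ (r.val + s.val) * I) / 2) := by
  rw [cZap, injB_mul_diagonal, cZab, cZpb]
  simp only [← Matrix.mul_assoc]
  rw [Matrix.mul_assoc (projY s), Matrix.mul_assoc (projY s), diagonal_mul_diagonal,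
    diagonal_mul_diagonal, projY_mul_diagonal_mul_injB]
  congr 1; funext y
  rw [← sum_star_yket_mul_neg_one_pow_mul_hket, Finset.mul_sum]
  congr 1; funext b
  ring

lemma neg_one_pow_mul_one_sub_neg_one_pow_mul {R : Type*} [CommRing R] (a p : ZMod 2) {u : R}
    (hu : u ^ 2 = -1) :
    (-1) ^ (a.val * p.val) * (1 - (-1) ^ (a.val + p.val) * u)
      = (1 - u) * (u ^ a.val * u ^ p.val) := by
  rcases zmod_two_eq_zero_or_one a with rfl | rfl <;>
    rcases zmod_two_eq_zero_or_one p with rfl | rfl <;>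
    simp only [ZMod.val_zero, ZMod.val_one]
  · ring
  · linear_combination hu
  · linear_combination hu
  · linear_combination (u - 1) * hu

/-- Bridge case of Lemma 3: a bridge qubit prepared in `|h_r⟩`, entangled with
its two neighbours by controlled-Z gates and measured in the Pauli-Y basis with
outcome `s`, implements `cZ_{a,p}` up to local `S^ε` corrections, a global
phase `e^{−iεπ/4}` and normalization `1/√2`, where `ε = (−1)^{r+s}`. -/
theorem stmt_17 (r s : ZMod 2) (ε : ℤ) (hε : ε = (-1 : ℤ) ^ (r.val + s.val)) :
    projY s * cZab * cZpb * (injB (hket r) * cZap)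
      = (((Real.sqrt 2 : ℂ))⁻¹ * Complex.exp (-(ε : ℂ) * Complex.I * (Real.pi / 4))) •
          ((qS ^ ε) ⊗ₖ (qS ^ ε)) := by
  have hε' : ε = 1 ∨ ε = -1 := hε ▸ neg_one_pow_eq_or ℤ _
  have hεC : ((-1) ^ (r.val + s.val) : ℂ) = ε := by rw [hε]; push_cast; rfl
  have hu : ((ε : ℂ) * I) ^ 2 = -1 := by rcases hε' with rfl | rfl <;> simp
  rw [bridge_eq_diagonal, exp_neg_mul_I_mul_pi_div_four hε', qS_zpow hε',
    diagonal_kronecker_diagonal, ← diagonal_smul]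
  congr 1; funext y
  rw [Pi.smul_apply, smul_eq_mul, ← mul_assoc ((Real.sqrt 2 : ℂ))⁻¹,
    ofReal_sqrt_two_inv_mul_self, hεC]
  linear_combination neg_one_pow_mul_one_sub_neg_one_pow_mul y.1 y.2 hu / 2
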